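/- Let A ⊆ ℝⁿ be a finite index set of data points in a node, with nonempty subsets A⁺, A⁻ partitioning A. Let N = |A|, p⁺ = |A⁺|/N, p⁻ = |A⁻|/N, and for a vector Y ∈ ℝ^A let Ȳ_S denote the mean of Y over S. Define the impurity gain Δ = (1/N)∑_{i∈A}(Y_i − Ȳ_A)² − p⁺·(1/|A⁺|)∑_{i∈A⁺}(Y_i − Ȳ_{A⁺})² − p⁻·(1/|A⁻|)∑_{i∈A⁻}(Y_i − Ȳ_{A⁻})². Define the decision stump Ŷ(i) = p⁻/√(p⁺p⁻) if i ∈ A⁺ and Ŷ(i) = −p⁺/√(p⁺p⁻) if i ∈ A⁻. Then Δ = ((1/N)∑_{i∈A}(Y_i − Ȳ_A)·Ŷ(i))². -/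

import Mathlib

/-! With `a = #A⁺`, `b = #A⁻` and `d` the difference of the two child means, splitting the
sum of squares of `A` into within-child and between-child parts gives
`Δ = a b / N² · d² = p⁺ p⁻ d²`. The responses centred at the mean of `A` sum to `a b / N · d` on
`A⁺` and to its negative on `A⁻`, so the stump, constant on each child with jump
`(p⁻ + p⁺) / √(p⁺ p⁻) = 1 / √(p⁺ p⁻)`, has empirical inner product `√(p⁺ p⁻) · d` with them. -/

open Finset
open scoped BigOperators

namespace Finset

variable {ι K : Type*} [Field K] [CharZero K]

theorem sum_sub_eq_card_mul_expect_sub (s : Finset ι) (f : ι → K) (c : K) :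
    ∑ i ∈ s, (f i - c) = #s * (𝔼 i ∈ s, f i - c) := by
  rw [sum_sub_distrib, sum_const, nsmul_eq_mul, mul_sub, card_mul_expect]

theorem sum_sq_sub_eq_sum_sq_sub_expect_add (s : Finset ι) (f : ι → K) (c : K) :
    ∑ i ∈ s, (f i - c) ^ 2
      = ∑ i ∈ s, (f i - 𝔼 j ∈ s, f j) ^ 2 + #s * (𝔼 i ∈ s, f i - c) ^ 2 := by
  set m := 𝔼 i ∈ s, f i
  have hcentered : ∑ i ∈ s, (f i - m) = 0 := by
    rw [sum_sub_eq_card_mul_expect_sub, sub_self, mul_zero]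
  calc ∑ i ∈ s, (f i - c) ^ 2
      = ∑ i ∈ s, ((f i - m) ^ 2 + 2 * (m - c) * (f i - m) + (m - c) ^ 2) :=
        sum_congr rfl fun i _ ↦ by ring
    _ = ∑ i ∈ s, (f i - m) ^ 2 + #s * (m - c) ^ 2 := by
        rw [sum_add_distrib, sum_add_distrib, ← mul_sum, hcentered, sum_const, nsmul_eq_mul,
          mul_zero, add_zero]

variable [DecidableEq ι] {s t : Finset ι}

theorem expect_union (h : Disjoint s t) (f : ι → K) :
    𝔼 i ∈ s ∪ t, f i = (#s * 𝔼 i ∈ s, f i + #t * 𝔼 i ∈ t, f i) / (#s + #t) := by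
  rw [expect_eq_sum_div_card, sum_union h, card_union_of_disjoint h, card_mul_expect,
    card_mul_expect, Nat.cast_add]

theorem sum_sub_expect_union_left (h : Disjoint s t) (f : ι → K) :
    ∑ i ∈ s, (f i - 𝔼 j ∈ s ∪ t, f j)
      = #s * #t / (#s + #t) * (𝔼 i ∈ s, f i - 𝔼 i ∈ t, f i) := by
  rw [sum_sub_eq_card_mul_expect_sub, expect_union h]
  by_cases hst : #s + #t = 0
  · simp [show #s = 0 by omega]
  have hst' : (#s + #t : K) ≠ 0 := by exact_mod_cast hst
  field_simp
  ring

theorem sum_sq_sub_expect_union (h : Disjoint s t) (f : ι → K) :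
    ∑ i ∈ s ∪ t, (f i - 𝔼 j ∈ s ∪ t, f j) ^ 2
      = ∑ i ∈ s, (f i - 𝔼 j ∈ s, f j) ^ 2 + ∑ i ∈ t, (f i - 𝔼 j ∈ t, f j) ^ 2
        + #s * #t / (#s + #t) * (𝔼 i ∈ s, f i - 𝔼 i ∈ t, f i) ^ 2 := by
  rw [sum_union h, sum_sq_sub_eq_sum_sq_sub_expect_add s, sum_sq_sub_eq_sum_sq_sub_expect_add t,
    expect_union h]
  by_cases hst : #s + #t = 0
  · simp [show #s = 0 by omega, show #t = 0 by omega]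
  have hst' : (#s + #t : K) ≠ 0 := by exact_mod_cast hst
  field_simp
  ring

theorem sum_sub_expect_union_mul_of_const_on_parts (h : Disjoint s t) (f g : ι → K) {u v : K}
    (hs : ∀ i ∈ s, g i = u) (ht : ∀ i ∈ t, g i = v) :
    ∑ i ∈ s ∪ t, (f i - 𝔼 j ∈ s ∪ t, f j) * g i
      = #s * #t / (#s + #t) * (𝔼 i ∈ s, f i - 𝔼 i ∈ t, f i) * (u - v) := by
  have hs' : ∑ i ∈ s, (f i - 𝔼 j ∈ s ∪ t, f j) * g i = ∑ i ∈ s, (f i - 𝔼 j ∈ s ∪ t, f j) * u :=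
    sum_congr rfl fun i hi ↦ by rw [hs i hi]
  have ht' : ∑ i ∈ t, (f i - 𝔼 j ∈ s ∪ t, f j) * g i = ∑ i ∈ t, (f i - 𝔼 j ∈ t ∪ s, f j) * v :=
    sum_congr rfl fun i hi ↦ by rw [ht i hi, union_comm]
  rw [sum_union h, hs', ht', ← sum_mul, ← sum_mul, sum_sub_expect_union_left h,
    sum_sub_expect_union_left h.symm]
  ring

end Finset

/-- The CART variance impurity gain of any binary partition of a node equals the
squared empirical inner product between the centered responses and the
normalized decision stump. -/
theorem impurity_gain_eq_sq_inner {ι : Type*} [DecidableEq ι]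
    (A Ap Am : Finset ι) (hunion : Ap ∪ Am = A) (hdisj : Disjoint Ap Am)
    (hpne : Ap.Nonempty) (hmne : Am.Nonempty)
    (Y : ι → ℝ)
    (N pp pm : ℝ) (hN : N = A.card)
    (hpp : pp = (Ap.card : ℝ) / N) (hpm : pm = (Am.card : ℝ) / N)
    (Ybar : Finset ι → ℝ) (hYbar : ∀ S : Finset ι, Ybar S = (∑ i ∈ S, Y i) / S.card)
    (Δ : ℝ)
    (hΔ : Δ = (1 / N) * ∑ i ∈ A, (Y i - Ybar A) ^ 2
        - pp * ((1 / (Ap.card : ℝ)) * ∑ i ∈ Ap, (Y i - Ybar Ap) ^ 2)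
        - pm * ((1 / (Am.card : ℝ)) * ∑ i ∈ Am, (Y i - Ybar Am) ^ 2))
    (Yhat : ι → ℝ)
    (hYhatp : ∀ i ∈ Ap, Yhat i = pm / Real.sqrt (pp * pm))
    (hYhatm : ∀ i ∈ Am, Yhat i = -pp / Real.sqrt (pp * pm)) :
    Δ = ((1 / N) * ∑ i ∈ A, (Y i - Ybar A) * Yhat i) ^ 2 := by
  obtain rfl : Ybar = fun S ↦ 𝔼 i ∈ S, Y i := funext fun S ↦ by rw [hYbar, expect_eq_sum_div_card]
  subst hunion hΔ
  have ha : (0 : ℝ) < #Ap := by exact_mod_cast hpne.card_pos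
  have hb : (0 : ℝ) < #Am := by exact_mod_cast hmne.card_pos
  rw [card_union_of_disjoint hdisj, Nat.cast_add] at hN
  have hpp0 : 0 < pp := by rw [hpp, hN]; positivity
  have hpm0 : 0 < pm := by rw [hpm, hN]; positivity
  set s := Real.sqrt (pp * pm)
  have hs : s ^ 2 = pp * pm := Real.sq_sqrt (by positivity)
  have hs0 : s ≠ 0 := by positivity
  rw [sum_sq_sub_expect_union hdisj,
    sum_sub_expect_union_mul_of_const_on_parts hdisj Y Yhat hYhatp hYhatm]
  set d := 𝔼 i ∈ Ap, Y i - 𝔼 i ∈ Am, Y i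
  calc _ = pp * pm * d ^ 2 := by rw [hpp, hpm, hN]; field_simp; ring
    _ = (pp * pm * d / s) ^ 2 := by rw [div_pow, mul_pow, hs]; field_simp
    _ = _ := by
      congr 1
      rw [hpp, hpm, hN]
      field_simp
      ring
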